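/- arXiv:math/0104133 — 3 statements merged into one kernel-verified Lean document; each statement's English description precedes it below -/
import Mathlib

section
/- Let u ∈ C_{+,log} be (log,exp)-convex. Then for any a > 1 and all r ≥ 0, the L-function L_u(r) = Σ_{n=0}^∞ ℓ_u(n) r^n satisfies L_u(r) ≤ (ea/log a) · u(ar). -/
noncomputable def ell (u : ℝ → ℝ) (t : ℝ) : ℝ :=
  ⨅ r : {r : ℝ // 0 < r}, u r / (r : ℝ) ^ t

lemma ell_le (u : ℝ → ℝ) (hpos : ∀ r ≥ 0, 0 < u r) (t : ℝ) {ρ : ℝ} (hρ : 0 < ρ) :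
    ell u t ≤ u ρ / ρ ^ t := by
  have hbdd : BddBelow (Set.range fun r : {r : ℝ // 0 < r} => u r / (r : ℝ) ^ t) := by
    refine ⟨0, ?_⟩
    rintro x ⟨r, rfl⟩
    have h1 := hpos r r.2.le
    have h2 : (0:ℝ) < (r:ℝ) ^ t := Real.rpow_pos_of_pos r.2 t
    positivity
  exact ciInf_le hbdd ⟨ρ, hρ⟩

lemma ell_nonneg (u : ℝ → ℝ) (hpos : ∀ r ≥ 0, 0 < u r) (t : ℝ) : 0 ≤ ell u t :=
  le_ciInf fun r => by
    have h1 := hpos r r.2.le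
    have h2 : (0:ℝ) < (r:ℝ) ^ t := Real.rpow_pos_of_pos r.2 t
    positivity

theorem L_function_upper_bound (u : ℝ → ℝ)
    (hpos : ∀ r ≥ 0, 0 < u r)
    (hcont : ContinuousOn u (Set.Ici 0))
    (hlim : Filter.Tendsto (fun r => Real.log (u r) / Real.log r)
      Filter.atTop Filter.atTop)
    (hconv : ConvexOn ℝ Set.univ (fun x : ℝ => Real.log (u (Real.exp x)))) :
    ∀ a > (1 : ℝ), ∀ r ≥ (0 : ℝ),
      (∑' n : ℕ, ell u n * r ^ n) ≤ Real.exp 1 * a / Real.log a * u (a * r) := by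
  intro a ha r hr
  have ha0 : (0:ℝ) < a := by linarith
  have hla : 0 < Real.log a := Real.log_pos ha
  have hE : (1:ℝ) ≤ Real.exp 1 := by
    have := Real.exp_one_gt_d9; linarith
  have hlogkey : Real.log a ≤ Real.exp 1 * (a - 1) := by
    have h1 : Real.log a ≤ a - 1 := Real.log_le_sub_one_of_pos ha0
    nlinarith
  rcases eq_or_lt_of_le hr with hr0 | hr0
  · -- r = 0
    subst hr0
    have hsum : (∑' n : ℕ, ell u n * (0:ℝ) ^ n) = ell u 0 := by
      rw [tsum_eq_single 0]
      · norm_num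
      · intro n hn
        simp [zero_pow hn]
    rw [hsum]
    have h1 : ell u 0 ≤ u 0 := by
      have htend : Filter.Tendsto u (nhdsWithin 0 (Set.Ioi 0)) (nhds (u 0)) := by
        have := (hcont 0 (Set.self_mem_Ici)).tendsto
        exact this.mono_left (nhdsWithin_mono 0 Set.Ioi_subset_Ici_self)
      refine ge_of_tendsto htend ?_
      filter_upwards [self_mem_nhdsWithin] with ρ hρ
      have := ell_le u hpos 0 (Set.mem_Ioi.mp hρ)
      simpa using this

    have h2 : u 0 ≤ Real.exp 1 * a / Real.log a * u (a * 0) := by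
      rw [mul_zero]
      have hu0 := hpos 0 le_rfl
      have hc : (1:ℝ) ≤ Real.exp 1 * a / Real.log a := by
        rw [le_div_iff₀ hla]
        nlinarith
      nlinarith
    linarith
  · -- r > 0
    have har : 0 < a * r := mul_pos ha0 hr0
    have hu : 0 < u (a * r) := hpos _ har.le
    have hia : (0:ℝ) < 1 / a := by positivity
    have hia1 : (1:ℝ) / a < 1 := by
      rw [div_lt_one ha0]; exact ha
    have hbound : ∀ n : ℕ, ell u n * r ^ n ≤ u (a * r) * (1 / a) ^ n := by
      intro n
      have h1 : ell u n ≤ u (a * r) / (a * r) ^ (n : ℝ) := ell_le u hpos n har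
      have h2 : (a * r) ^ (n : ℝ) = (a * r) ^ n := Real.rpow_natCast _ n
      rw [h2] at h1
      have hrn : (0:ℝ) < r ^ n := pow_pos hr0 n
      calc ell u n * r ^ n ≤ u (a * r) / (a * r) ^ n * r ^ n := by
            exact mul_le_mul_of_nonneg_right h1 hrn.le
        _ = u (a * r) * (1 / a) ^ n := by
            rw [mul_pow, div_pow, one_pow]
            field_simp
    have hgsum : Summable (fun n : ℕ => u (a * r) * (1 / a) ^ n) :=
      (summable_geometric_of_lt_one hia.le hia1).mul_left _
    have hf : Summable (fun n : ℕ => ell u n * r ^ n) := by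
      refine Summable.of_nonneg_of_le (fun n => ?_) hbound hgsum
      exact mul_nonneg (ell_nonneg u hpos n) (pow_nonneg hr0.le n)
    have hts : (∑' n : ℕ, ell u n * r ^ n) ≤ ∑' n : ℕ, u (a * r) * (1 / a) ^ n :=
      Summable.tsum_le_tsum hbound hf hgsum
    have hgeom : (∑' n : ℕ, u (a * r) * (1 / a) ^ n) = u (a * r) * (a / (a - 1)) := by
      rw [tsum_mul_left, tsum_geometric_of_lt_one hia.le hia1]
      congr 1
      rw [one_sub_div (ne_of_gt ha0)]
      rw [inv_div]
    rw [hgeom] at hts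
    refine hts.trans ?_
    have hconst : a / (a - 1) ≤ Real.exp 1 * a / Real.log a := by
      rw [div_le_div_iff₀ (by linarith) hla]
      nlinarith
    calc u (a * r) * (a / (a - 1)) ≤ u (a * r) * (Real.exp 1 * a / Real.log a) :=
          mul_le_mul_of_nonneg_left hconst hu.le
      _ = Real.exp 1 * a / Real.log a * u (a * r) := mul_comm _ _
end

section
/- Let u be a positive continuous function on [0,∞) with lim_{r→∞} log u(r)/√r = ∞ that is (log, x²)-convex. Then lim_{n→∞} (1/(ℓ_u(n)(n!)²))^{1/n} = 0, where ℓ_u(t) = inf_{r>0} u(r)/r^t; consequently the series L_u^#(r) = Σ_{n=0}^∞ r^n/(ℓ_u(n)(n!)²) defines an entire function. -/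
open Real Filter Nat

lemma pow_div_le_exp_sub {x : ℝ} (hx : 0 ≤ x) {k : ℕ} (hk : k ≠ 0) :
    (x / k) ^ k ≤ exp (x - k) :=
  calc (x / k) ^ k ≤ exp (x / k - 1) ^ k := by
        gcongr
        linarith [add_one_le_exp (x / k - 1)]
    _ = exp (x - k) := by
        rw [← exp_nat_mul]
        field_simp

lemma pow_le_exp_mul_factorial (n : ℕ) : (n : ℝ) ^ n ≤ exp n * n ! := by
  have := pow_div_factorial_le_exp (n : ℝ) (Nat.cast_nonneg n) n
  rwa [div_le_iff₀ (by positivity)] at this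

lemma sq_pow_mul_pow_le_exp_mul_factorial_sq {B r : ℝ} (hB : 0 ≤ B) (hr : 0 ≤ r) {n : ℕ}
    (hn : n ≠ 0) : (B ^ 2) ^ n * r ^ n ≤ exp (2 * B * √r) * (n ! : ℝ) ^ 2 := by
  have hexp := pow_div_le_exp_sub (x := 2 * B * √r) (by positivity) (k := 2 * n) (by omega)
  have hn' : (n : ℝ) ≠ 0 := by exact_mod_cast hn
  calc (B ^ 2) ^ n * r ^ n = (2 * B * √r / ↑(2 * n)) ^ (2 * n) * ((n : ℝ) ^ n) ^ 2 := by
        have : 2 * B * √r / ↑(2 * n) = B * √r / n := by push_cast; field_simp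
        rw [this, div_pow, mul_pow, ← pow_mul, ← pow_mul, pow_mul √r, sq_sqrt hr, mul_comm n 2]
        field_simp
    _ ≤ exp (2 * B * √r - ↑(2 * n)) * (exp n * n !) ^ 2 := by
        gcongr
        exact pow_le_exp_mul_factorial n
    _ = exp (2 * B * √r) * (n ! : ℝ) ^ 2 := by
        rw [mul_pow, ← exp_nat_mul]
        push_cast
        rw [← mul_assoc, ← exp_add]
        ring_nf

lemma eventually_pow_le_mul_factorial (x : ℝ) {m : ℝ} (hm : 0 < m) :
    ∀ᶠ n : ℕ in atTop, x ^ n ≤ m * n ! := by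
  filter_upwards [(FloorSemiring.tendsto_pow_div_factorial_atTop x).eventually
    (ge_mem_nhds hm)] with n hn
  rwa [div_le_iff₀ (by positivity)] at hn

lemma le_ell {u : ℝ → ℝ} {t a : ℝ} (h : ∀ r > 0, a ≤ u r / r ^ t) : a ≤ ell u t :=
  have : Nonempty {r : ℝ // 0 < r} := ⟨⟨1, one_pos⟩⟩
  le_ciInf fun r => h r r.2

lemma eventually_pow_le_ell_mul_factorial_sq {u : ℝ → ℝ} (hpos : ∀ r ≥ 0, 0 < u r)
    (hcont : ContinuousOn u (Set.Ici 0)) (hlim : Tendsto (fun r => log (u r) / √r) atTop atTop)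
    {C : ℝ} (hC : 0 ≤ C) : ∀ᶠ n : ℕ in atTop, C ^ n ≤ ell u n * (n ! : ℝ) ^ 2 := by
  obtain ⟨R₀, hR₀⟩ := eventually_atTop.1 (hlim.eventually_ge_atTop (2 * √C))
  set R := max R₀ 0
  obtain ⟨x₀, hx₀, hmin⟩ := isCompact_Icc.exists_isMinOn (Set.nonempty_Icc.2 (le_max_right R₀ 0))
    (hcont.mono Set.Icc_subset_Ici_self)
  filter_upwards [eventually_pow_le_mul_factorial (C * R) (hpos x₀ hx₀.1), eventually_ne_atTop 0]
    with n hsmall hn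
  have hfac : 0 < (n ! : ℝ) ^ 2 := by positivity
  rw [← div_le_iff₀ hfac]
  refine le_ell fun r hr => ?_
  rw [rpow_natCast, div_le_div_iff₀ hfac (by positivity)]
  rcases le_total r R with hrR | hRr
  · calc C ^ n * r ^ n ≤ (C * R) ^ n := by rw [mul_pow]; gcongr
      _ ≤ u x₀ * n ! := hsmall
      _ ≤ u r * (n ! : ℝ) ^ 2 :=
          mul_le_mul (hmin ⟨hr.le, hrR⟩)
            (le_self_pow₀ (by exact_mod_cast n.factorial_pos) two_ne_zero) (by positivity)
            (hpos r hr.le).le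
  · have hgrowth : exp (2 * √C * √r) ≤ u r := by
      have := hR₀ r ((le_max_left R₀ 0).trans hRr)
      rw [le_div_iff₀ (sqrt_pos.2 hr)] at this
      simpa only [exp_log (hpos r hr.le)] using exp_le_exp.2 this
    calc C ^ n * r ^ n = ((√C) ^ 2) ^ n * r ^ n := by rw [sq_sqrt hC]
      _ ≤ exp (2 * √C * √r) * (n ! : ℝ) ^ 2 :=
          sq_pow_mul_pow_le_exp_mul_factorial_sq (sqrt_nonneg C) hr.le hn
      _ ≤ u r * (n ! : ℝ) ^ 2 := by gcongr

lemma tendsto_one_div_rpow_of_eventually_pow_le {a : ℕ → ℝ}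
    (ha : ∀ C > 0, ∀ᶠ n in atTop, C ^ n ≤ a n) :
    Tendsto (fun n : ℕ => (1 / a n) ^ (1 / (n : ℝ))) atTop (nhds 0) := by
  refine tendsto_order.2 ⟨fun ε hε => ?_, fun ε hε => ?_⟩
  · filter_upwards [ha 1 one_pos] with n hn
    have : 0 ≤ a n := zero_le_one.trans (by simpa using hn)
    exact hε.trans_le (by positivity)
  · filter_upwards [ha (2 / ε) (by positivity), eventually_ne_atTop 0] with n hn hn0
    have han : 0 < a n := (by positivity : 0 < (2 / ε) ^ n).trans_le hn
    have hinv : 1 / a n ≤ (ε / 2) ^ n := by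
      simpa only [one_div, ← inv_pow, inv_div] using one_div_le_one_div_of_le (by positivity) hn
    calc (1 / a n) ^ (1 / (n : ℝ)) ≤ ((ε / 2) ^ n) ^ (1 / (n : ℝ)) := by gcongr
      _ = ε / 2 := by rw [one_div, pow_rpow_inv_natCast (by positivity) hn0]
      _ < ε := by linarith

lemma summable_pow_div_of_eventually_pow_le {a : ℕ → ℝ}
    (ha : ∀ C > 0, ∀ᶠ n in atTop, C ^ n ≤ a n) (r : ℝ) : Summable (fun n : ℕ => r ^ n / a n) := by
  refine summable_geometric_two.of_norm_bounded_eventually ?_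
  rw [Nat.cofinite_eq_atTop]
  filter_upwards [ha (2 * (|r| + 1)) (by positivity)] with n hn
  have han : 0 < a n := (by positivity : 0 < (2 * (|r| + 1)) ^ n).trans_le hn
  calc ‖r ^ n / a n‖ = |r| ^ n / a n := by rw [norm_div, norm_pow, norm_of_nonneg han.le]; rfl
    _ ≤ (|r| + 1) ^ n / (2 * (|r| + 1)) ^ n := by gcongr; linarith
    _ = (1 / 2) ^ n := by rw [← div_pow]; field_simp

theorem Lsharp_entire_general (u : ℝ → ℝ)
    (hpos : ∀ r ≥ 0, 0 < u r)
    (hcont : ContinuousOn u (Set.Ici 0))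
    (hlim : Filter.Tendsto (fun r => Real.log (u r) / Real.sqrt r)
      Filter.atTop Filter.atTop) :
    Filter.Tendsto
      (fun n : ℕ => (1 / (ell u n * ((n.factorial : ℝ)) ^ 2)) ^ (1 / (n : ℝ)))
      Filter.atTop (nhds 0) ∧
    ∀ r : ℝ, Summable (fun n : ℕ => r ^ n / (ell u n * ((n.factorial : ℝ)) ^ 2)) := by
  have hgrowth (C : ℝ) (hC : C > 0) :=
    eventually_pow_le_ell_mul_factorial_sq hpos hcont hlim hC.le
  exact ⟨tendsto_one_div_rpow_of_eventually_pow_le hgrowth,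
    summable_pow_div_of_eventually_pow_le hgrowth⟩

theorem Lsharp_entire (u : ℝ → ℝ)
    (hpos : ∀ r ≥ 0, 0 < u r)
    (hcont : ContinuousOn u (Set.Ici 0))
    (hlim : Filter.Tendsto (fun r => Real.log (u r) / Real.sqrt r)
      Filter.atTop Filter.atTop)
    (hconv : ConvexOn ℝ (Set.Ici 0) (fun x : ℝ => Real.log (u (x ^ 2)))) :
    Filter.Tendsto
      (fun n : ℕ => (1 / (ell u n * ((n.factorial : ℝ)) ^ 2)) ^ (1 / (n : ℝ)))
      Filter.atTop (nhds 0) ∧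
    ∀ r : ℝ, Summable (fun n : ℕ => r ^ n / (ell u n * ((n.factorial : ℝ)) ^ 2)) :=
  Lsharp_entire_general u hpos hcont hlim
end

section
/- If u ∈ C_{+,log} is (log, x²)-convex, then the sequence α_u(n) = 1/(n! ℓ_u(n)) is equivalent to a sequence λ(n) of positive reals such that {λ(n)/n!} is log-concave; explicitly, one may take λ(n) = α_u(n)(n!)²/n^{2n}, i.e., {n!/(ℓ_u(n) n^{2n})} is log-concave and {α_u(n)} and {λ(n)} differ by at most geometric factors. -/
section helpers

open Real Filter

lemma ell_lb (u : ℝ → ℝ) (hpos : ∀ r ≥ 0, 0 < u r)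
    (hcont : ContinuousOn u (Set.Ici 0))
    (hlim : Filter.Tendsto (fun r => Real.log (u r) / Real.log r)
      Filter.atTop Filter.atTop)
    (t : ℝ) (ht : 0 ≤ t) : ∃ ε > 0, ∀ r : ℝ, 0 < r → ε ≤ u r / r ^ t := by
  obtain ⟨R, hR⟩ := eventually_atTop.1 (tendsto_atTop.mp hlim (t + 1))
  set R' := max R 2 with hR'
  have hR'2 : (2:ℝ) ≤ R' := le_max_right _ _
  have hcpt : IsCompact (Set.Icc (0:ℝ) R') := isCompact_Icc
  obtain ⟨x₀, hx₀mem, hx₀min⟩ := hcpt.exists_isMinOn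
    (Set.nonempty_Icc.2 (by linarith)) (hcont.mono Set.Icc_subset_Ici_self)
  have hm : 0 < u x₀ := hpos x₀ hx₀mem.1
  set M := max 1 (R' ^ t) with hM'
  have hM : (0:ℝ) < M := lt_of_lt_of_le one_pos (le_max_left _ _)
  refine ⟨min (u x₀ / M) 2, lt_min (by positivity) two_pos, ?_⟩
  intro r hr
  rcases le_or_gt r R' with h | h
  · refine le_trans (min_le_left _ _) ?_
    have hrt : 0 < r ^ t := Real.rpow_pos_of_pos hr t
    have hub : r ^ t ≤ M := by
      rcases le_or_gt r 1 with h1 | h1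
      · calc r ^ t ≤ 1 ^ t := Real.rpow_le_rpow hr.le h1 ht
          _ = 1 := Real.one_rpow t
          _ ≤ M := le_max_left _ _
      · calc r ^ t ≤ R' ^ t := Real.rpow_le_rpow hr.le h ht
          _ ≤ M := le_max_right _ _
    have hmr : u x₀ ≤ u r := isMinOn_iff.1 hx₀min r ⟨hr.le, h⟩
    exact div_le_div₀ (hpos r hr.le).le hmr hrt hub
  · refine le_trans (min_le_right _ _) ?_
    have h2r : (2:ℝ) ≤ r := le_trans hR'2 h.le
    have hlogr : 0 < Real.log r := Real.log_pos (by linarith)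
    have hfr : t + 1 ≤ Real.log (u r) / Real.log r :=
      hR r (le_trans (le_max_left R 2) h.le)
    have hlog : (t + 1) * Real.log r ≤ Real.log (u r) := (le_div_iff₀ hlogr).1 hfr
    have hur : r ^ (t + 1) ≤ u r := by
      rw [Real.rpow_def_of_pos hr]
      calc Real.exp (Real.log r * (t + 1)) ≤ Real.exp (Real.log (u r)) :=
            Real.exp_le_exp.2 (by linarith [hlog, mul_comm (Real.log r) (t + 1)])
        _ = u r := Real.exp_log (hpos r hr.le)
    have hdiv : r ^ (t + 1) / r ^ t = r := by
      rw [Real.rpow_add hr, Real.rpow_one]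
      field_simp
    calc (2:ℝ) ≤ r := h2r
      _ = r ^ (t + 1) / r ^ t := hdiv.symm
      _ ≤ u r / r ^ t := by gcongr

lemma ell_pos (u : ℝ → ℝ) (hpos : ∀ r ≥ 0, 0 < u r)
    (hcont : ContinuousOn u (Set.Ici 0))
    (hlim : Filter.Tendsto (fun r => Real.log (u r) / Real.log r)
      Filter.atTop Filter.atTop)
    (t : ℝ) (ht : 0 ≤ t) : 0 < ell u t := by
  obtain ⟨ε, hε, h⟩ := ell_lb u hpos hcont hlim t ht
  haveI : Nonempty {r : ℝ // 0 < r} := ⟨⟨1, one_pos⟩⟩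
  exact lt_of_lt_of_le hε (le_ciInf fun r => h r r.2)

lemma ell_le_s14 (u : ℝ → ℝ) (hpos : ∀ r ≥ 0, 0 < u r)
    (hcont : ContinuousOn u (Set.Ici 0))
    (hlim : Filter.Tendsto (fun r => Real.log (u r) / Real.log r)
      Filter.atTop Filter.atTop)
    (t : ℝ) (ht : 0 ≤ t) (r : ℝ) (hr : 0 < r) : ell u t ≤ u r / r ^ t := by
  obtain ⟨ε, hε, h⟩ := ell_lb u hpos hcont hlim t ht
  refine ciInf_le ⟨ε, ?_⟩ (⟨r, hr⟩ : {r : ℝ // 0 < r})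
  rintro v ⟨⟨r', hr'⟩, rfl⟩
  exact h r' hr'

lemma amgm_core (n : ℕ) {x y : ℝ} (hx : 0 < x) (hy : 0 < y) :
    (x / (n:ℝ)) ^ n * (y / ((n:ℝ) + 2)) ^ (n + 2)
      ≤ ((x + y) / (2 * (n:ℝ) + 2)) ^ (2 * n + 2) := by
  rcases Nat.eq_zero_or_pos n with rfl | hn
  · simp only [Nat.cast_zero, pow_zero, one_mul]
    norm_num
    nlinarith [sq_nonneg x, hx.le, hy.le, mul_pos hx hy]
  · have hn' : (0:ℝ) < (n:ℝ) := by exact_mod_cast hn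
    set w₁ : ℝ := (n:ℝ) / (2 * (n:ℝ) + 2) with hw₁
    set w₂ : ℝ := ((n:ℝ) + 2) / (2 * (n:ℝ) + 2) with hw₂
    set p₁ : ℝ := x / (n:ℝ) with hp₁
    set p₂ : ℝ := y / ((n:ℝ) + 2) with hp₂
    have hw : w₁ + w₂ = 1 := by rw [hw₁, hw₂]; field_simp; ring
    have ham : p₁ ^ w₁ * p₂ ^ w₂ ≤ w₁ * p₁ + w₂ * p₂ :=
      Real.geom_mean_le_arith_mean2_weighted
        (by positivity) (by positivity) (by positivity) (by positivity) hw
    have hsum : w₁ * p₁ + w₂ * p₂ = (x + y) / (2 * (n:ℝ) + 2) := by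
      rw [hw₁, hw₂, hp₁, hp₂]; field_simp
    have h1 : (p₁ ^ w₁) ^ (2 * n + 2 : ℕ) = p₁ ^ n := by
      rw [← Real.rpow_natCast (p₁ ^ w₁) (2 * n + 2), ← Real.rpow_mul (by positivity)]
      rw [show w₁ * ((2 * n + 2 : ℕ) : ℝ) = (n : ℝ) by
        rw [hw₁]; push_cast; field_simp]
      exact Real.rpow_natCast p₁ n
    have h2 : (p₂ ^ w₂) ^ (2 * n + 2 : ℕ) = p₂ ^ (n + 2) := by
      rw [← Real.rpow_natCast (p₂ ^ w₂) (2 * n + 2), ← Real.rpow_mul (by positivity)]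
      rw [show w₂ * ((2 * n + 2 : ℕ) : ℝ) = ((n + 2 : ℕ) : ℝ) by
        rw [hw₂]; push_cast; field_simp]
      exact Real.rpow_natCast p₂ (n + 2)
    calc p₁ ^ n * p₂ ^ (n + 2)
        = (p₁ ^ w₁ * p₂ ^ w₂) ^ (2 * n + 2 : ℕ) := by rw [mul_pow, h1, h2]
      _ ≤ (w₁ * p₁ + w₂ * p₂) ^ (2 * n + 2 : ℕ) := by
          apply pow_le_pow_left₀ (by positivity) ham
      _ = ((x + y) / (2 * (n:ℝ) + 2)) ^ (2 * n + 2) := by rw [hsum]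

lemma npow_self_pos (n : ℕ) : 0 < ((n:ℝ)) ^ n := by
  rcases Nat.eq_zero_or_pos n with rfl | hn
  · norm_num
  · have : (0:ℝ) < n := by exact_mod_cast hn
    positivity

lemma npow2_pos (n : ℕ) : 0 < ((n:ℝ)) ^ (2 * n) := by
  rcases Nat.eq_zero_or_pos n with rfl | hn
  · norm_num
  · have : (0:ℝ) < n := by exact_mod_cast hn
    positivity

lemma pow_le_factorial_mul_exp (n : ℕ) :
    (n : ℝ) ^ n ≤ (n.factorial : ℝ) * Real.exp n := by
  induction n with
  | zero => simp
  | succ n ih =>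
    have key : ((n:ℝ) + 1) ^ n ≤ (n:ℝ) ^ n * Real.exp 1 := by
      rcases Nat.eq_zero_or_pos n with rfl | hn
      · simpa using Real.one_le_exp (by norm_num : (0:ℝ) ≤ 1)
      · have hn' : (0:ℝ) < n := by exact_mod_cast hn
        have h1 : (n:ℝ) + 1 = (n:ℝ) * (1 + 1 / n) := by field_simp
        have h2 : (1 + 1/(n:ℝ)) ^ n ≤ Real.exp 1 := by
          have h3 : (1 : ℝ) + 1/n ≤ Real.exp (1/n) := by
            have := Real.add_one_le_exp (1/(n:ℝ)); linarith
          calc (1 + 1/(n:ℝ)) ^ n ≤ (Real.exp (1/n)) ^ n :=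
                pow_le_pow_left₀ (by positivity) h3 n
            _ = Real.exp ((n:ℕ) * (1/(n:ℝ))) := (Real.exp_nat_mul _ n).symm
            _ = Real.exp 1 := by rw [mul_one_div, div_self (ne_of_gt hn')]
        calc ((n:ℝ)+1)^n = (n:ℝ)^n * (1+1/(n:ℝ))^n := by rw [h1, mul_pow]
          _ ≤ (n:ℝ)^n * Real.exp 1 :=
              mul_le_mul_of_nonneg_left h2 (by positivity)
    calc ((n+1 : ℕ):ℝ) ^ (n+1) = ((n:ℝ)+1) * ((n:ℝ)+1)^n := by push_cast; ring
      _ ≤ ((n:ℝ)+1) * ((n:ℝ)^n * Real.exp 1) :=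
          mul_le_mul_of_nonneg_left key (by positivity)
      _ ≤ ((n:ℝ)+1) * (((n.factorial:ℝ) * Real.exp n) * Real.exp 1) := by
          apply mul_le_mul_of_nonneg_left
            (mul_le_mul_of_nonneg_right ih (Real.exp_nonneg 1)) (by positivity)
      _ = ((n+1).factorial : ℝ) * Real.exp ((n+1:ℕ):ℝ) := by
          push_cast [Nat.factorial_succ]
          rw [Real.exp_add]
          ring

lemma key_ineq (u : ℝ → ℝ) (hpos : ∀ r ≥ 0, 0 < u r)
    (hcont : ContinuousOn u (Set.Ici 0))
    (hlim : Filter.Tendsto (fun r => Real.log (u r) / Real.log r)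
      Filter.atTop Filter.atTop)
    (hconv : ConvexOn ℝ (Set.Ici 0) (fun x : ℝ => Real.log (u (x ^ 2))))
    (n : ℕ) :
    (ell u (↑(n+1)) * ((n+1 : ℕ) : ℝ) ^ (2*(n+1))) ^ 2
      ≤ ell u ↑n * (n:ℝ) ^ (2*n) * (ell u ↑(n+2) * ((n+2 : ℕ) : ℝ) ^ (2*(n+2))) := by
  haveI : Nonempty {r : ℝ // 0 < r} := ⟨⟨1, one_pos⟩⟩
  have hF : (0:ℝ) < (n:ℝ)^n := npow_self_pos n
  have hapos : 0 < ell u (↑n : ℝ) :=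
    ell_pos u hpos hcont hlim _ (Nat.cast_nonneg n)
  have hbpos : 0 < ell u (↑(n+1) : ℝ) :=
    ell_pos u hpos hcont hlim _ (Nat.cast_nonneg (n+1))
  have hcpos : 0 < ell u (↑(n+2) : ℝ) :=
    ell_pos u hpos hcont hlim _ (Nat.cast_nonneg (n+2))
  set b := ell u (↑(n+1) : ℝ) with hbdef
  set B := (b * (((n:ℝ)+1)^(n+1))^2)^2 with hBdef
  set D := ((n:ℝ)^n)^2 * (((n:ℝ)+2)^(n+2))^2 with hDdef
  have hDpos : 0 < D := by rw [hDdef]; positivity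
  have hBpos : 0 < B := by rw [hBdef]; positivity
  have step1 : ∀ r s : ℝ, 0 < r → 0 < s →
      B * (r ^ n * s ^ (n+2)) ≤ D * (u r * u s) := by
    intro r s hr hs
    set x := Real.sqrt r with hxdef
    set y := Real.sqrt s with hydef
    have hx : 0 < x := Real.sqrt_pos.2 hr
    have hy : 0 < y := Real.sqrt_pos.2 hs
    have hx2 : x ^ 2 = r := Real.sq_sqrt hr.le
    have hy2 : y ^ 2 = s := Real.sq_sqrt hs.le
    set P := (x + y) / 2 with hPdef
    have hPpos : 0 < P := by rw [hPdef]; positivity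
    have h2P : x + y = 2 * P := by rw [hPdef]; ring
    -- convexity step
    have hu : u (P ^ 2) ^ 2 ≤ u r * u s := by
      have hcx := hconv.2 (Set.mem_Ici.2 hx.le) (Set.mem_Ici.2 hy.le)
        (by norm_num : (0:ℝ) ≤ 1/2) (by norm_num : (0:ℝ) ≤ 1/2)
        (by norm_num : (1/2 : ℝ) + 1/2 = 1)
      simp only [smul_eq_mul] at hcx
      have harg : (1/2 : ℝ) * x + 1/2 * y = P := by rw [hPdef]; ring
      rw [harg] at hcx
      have hl : Real.log (u (P^2) ^ 2) ≤ Real.log (u r * u s) := by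
        rw [Real.log_pow,
          Real.log_mul (ne_of_gt (hpos r hr.le)) (ne_of_gt (hpos s hs.le)),
          ← hx2, ← hy2]
        push_cast
        linarith
      exact (Real.log_le_log_iff
        (pow_pos (hpos _ (sq_nonneg P)) 2)
        (mul_pos (hpos r hr.le) (hpos s hs.le))).1 hl
    -- the ell bound at the midpoint
    have hbP : b * (P^(n+1))^2 ≤ u (P ^ 2) := by
      have h := ell_le_s14 u hpos hcont hlim (↑(n+1)) (Nat.cast_nonneg (n+1))
        (P^2) (by positivity)
      rw [Real.rpow_natCast] at h
      have := (le_div_iff₀ (pow_pos (pow_pos hPpos 2) (n+1))).1 h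
      calc b * (P^(n+1))^2 = b * (P^2)^(n+1) := by rw [pow_right_comm]
        _ ≤ u (P^2) := this
    have hbPnn : 0 ≤ b * (P^(n+1))^2 := by positivity
    -- AM-GM step
    have e5 : ∀ a : ℝ, (2*a)^(2*n+2) = ((2:ℝ)^(n+1) * a^(n+1))^2 := by
      intro a
      rw [show 2*n+2 = (n+1)*2 from by ring, pow_mul, mul_pow]
    have ham : x ^ n * y ^ (n+2) * ((2:ℝ)^(n+1) * ((n:ℝ)+1)^(n+1))^2
        ≤ ((2:ℝ)^(n+1) * P^(n+1))^2 * ((n:ℝ)^n * ((n:ℝ)+2)^(n+2)) := by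
      have h := amgm_core n hx hy
      rw [div_pow, div_pow, div_pow, div_mul_div_comm,
        div_le_div_iff₀ (by positivity) (by positivity)] at h
      rw [show (2*(n:ℝ)+2) = 2*((n:ℝ)+1) from by ring, e5, h2P, e5] at h
      exact h
    have ham2 : x ^ n * y ^ (n+2) * (((n:ℝ)+1)^(n+1))^2
        ≤ (P^(n+1))^2 * ((n:ℝ)^n * ((n:ℝ)+2)^(n+2)) := by
      have h2pos : (0:ℝ) < ((2:ℝ)^(n+1))^2 := by positivity
      apply le_of_mul_le_mul_left _ h2pos
      calc ((2:ℝ)^(n+1))^2 * (x ^ n * y ^ (n+2) * (((n:ℝ)+1)^(n+1))^2)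
          = x ^ n * y ^ (n+2) * ((2:ℝ)^(n+1) * ((n:ℝ)+1)^(n+1))^2 := by ring
        _ ≤ ((2:ℝ)^(n+1) * P^(n+1))^2 * ((n:ℝ)^n * ((n:ℝ)+2)^(n+2)) := ham
        _ = ((2:ℝ)^(n+1))^2 * ((P^(n+1))^2 * ((n:ℝ)^n * ((n:ℝ)+2)^(n+2))) := by
            ring
    rw [← hx2, ← hy2, hBdef, hDdef]
    calc (b * (((n:ℝ)+1)^(n+1))^2)^2 * ((x^2) ^ n * (y^2) ^ (n+2))
        = (x ^ n * y ^ (n+2) * (((n:ℝ)+1)^(n+1))^2)^2 * b^2 := by ring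
      _ ≤ ((P^(n+1))^2 * ((n:ℝ)^n * ((n:ℝ)+2)^(n+2)))^2 * b^2 := by
          apply mul_le_mul_of_nonneg_right
            (pow_le_pow_left₀ (by positivity) ham2 2) (by positivity)
      _ = (b * (P^(n+1))^2)^2 * ((n:ℝ)^n * ((n:ℝ)+2)^(n+2))^2 := by ring
      _ ≤ (u (P^2))^2 * ((n:ℝ)^n * ((n:ℝ)+2)^(n+2))^2 := by
          apply mul_le_mul_of_nonneg_right
            (pow_le_pow_left₀ hbPnn hbP 2) (by positivity)
      _ ≤ (u (x^2) * u (y^2)) * ((n:ℝ)^n * ((n:ℝ)+2)^(n+2))^2 := by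
          apply mul_le_mul_of_nonneg_right _ (by positivity)
          rw [hx2, hy2]; exact hu
      _ = ((n:ℝ)^n)^2 * (((n:ℝ)+2)^(n+2))^2 * (u (x^2) * u (y^2)) := by ring
  -- infimum manipulations
  have h3 : ∀ s : ℝ, 0 < s →
      B * s^(n+2) ≤ ell u (↑n : ℝ) * (D * u s) := by
    intro s hs
    have h4 : B * s^(n+2) / (D * u s) ≤ ell u (↑n : ℝ) := by
      apply le_ciInf
      rintro ⟨r, hr⟩
      show B * s^(n+2) / (D * u s) ≤ u r / (r:ℝ) ^ ((n:ℕ):ℝ)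
      rw [Real.rpow_natCast]
      rw [div_le_div_iff₀ (mul_pos hDpos (hpos s hs.le)) (pow_pos hr n)]
      calc B * s^(n+2) * r^n = B * (r^n * s^(n+2)) := by ring
        _ ≤ D * (u r * u s) := step1 r s hr hs
        _ = u r * (D * u s) := by ring
    exact (div_le_iff₀ (mul_pos hDpos (hpos s hs.le))).1 h4
  have h5 : ∀ s : ℝ, 0 < s →
      B / (ell u (↑n : ℝ) * D) ≤ u s / s^(n+2) := by
    intro s hs
    rw [div_le_div_iff₀ (mul_pos hapos hDpos) (pow_pos hs _)]
    calc B * s^(n+2) ≤ ell u (↑n : ℝ) * (D * u s) := h3 s hs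
      _ = u s * (ell u (↑n : ℝ) * D) := by ring
  have h6 : B / (ell u (↑n : ℝ) * D) ≤ ell u (↑(n+2) : ℝ) := by
    apply le_ciInf
    rintro ⟨s, hs⟩
    show B / (ell u (↑n : ℝ) * D) ≤ u s / (s:ℝ) ^ (((n+2:ℕ)):ℝ)
    rw [Real.rpow_natCast]
    exact h5 s hs
  have final : B ≤ ell u (↑(n+2) : ℝ) * (ell u (↑n : ℝ) * D) :=
    (div_le_iff₀ (mul_pos hapos hDpos)).1 h6
  have e7 : ((n+1:ℕ):ℝ)^(2*(n+1)) = (((n:ℝ)+1)^(n+1))^2 := by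
    push_cast; exact pow_mul' _ 2 (n+1)
  have e8 : (n:ℝ)^(2*n) = ((n:ℝ)^n)^2 := pow_mul' _ 2 n
  have e9 : ((n+2:ℕ):ℝ)^(2*(n+2)) = (((n:ℝ)+2)^(n+2))^2 := by
    push_cast; exact pow_mul' _ 2 (n+2)
  rw [e7, e8, e9]
  calc (b * (((n:ℝ)+1)^(n+1))^2)^2
      ≤ ell u (↑(n+2) : ℝ) * (ell u (↑n : ℝ) * D) := final
    _ = ell u ↑n * ((n:ℝ)^n)^2 * (ell u ↑(n+2) * (((n:ℝ)+2)^(n+2))^2) := by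
        rw [hDdef]; ring

end helpers

theorem alpha_u_near_B2 (u : ℝ → ℝ)
    (hpos : ∀ r ≥ 0, 0 < u r)
    (hcont : ContinuousOn u (Set.Ici 0))
    (hlim : Filter.Tendsto (fun r => Real.log (u r) / Real.log r)
      Filter.atTop Filter.atTop)
    (hconv : ConvexOn ℝ (Set.Ici 0) (fun x : ℝ => Real.log (u (x ^ 2)))) :
    let α : ℕ → ℝ := fun n => 1 / ((n.factorial : ℝ) * ell u n)
    let lam : ℕ → ℝ := fun n => (n.factorial : ℝ) / (ell u n * (n : ℝ) ^ (2 * n))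
    (∀ n, 0 < lam n) ∧
    (∀ n : ℕ,
      (lam n / n.factorial) * (lam (n + 2) / (n + 2).factorial)
        ≤ (lam (n + 1) / (n + 1).factorial) ^ 2) ∧
    (∃ K₁ > (0 : ℝ), ∃ K₂ > (0 : ℝ), ∃ c₁ > (0 : ℝ), ∃ c₂ > (0 : ℝ),
      ∀ n : ℕ, K₁ * c₁ ^ n * α n ≤ lam n ∧ lam n ≤ K₂ * c₂ ^ n * α n) := by
  intro α lam
  haveI : Nonempty {r : ℝ // 0 < r} := ⟨⟨1, one_pos⟩⟩
  have hell : ∀ m : ℕ, 0 < ell u (m : ℝ) := fun m =>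
    ell_pos u hpos hcont hlim _ (Nat.cast_nonneg m)
  have hlam : ∀ n, 0 < lam n := fun n =>
    div_pos (Nat.cast_pos.2 n.factorial_pos) (mul_pos (hell n) (npow2_pos n))
  refine ⟨hlam, ?_, ?_⟩
  · intro n
    have cancel : ∀ (N : ℕ) (X : ℝ),
        ((N.factorial : ℝ) / X) / (N.factorial : ℝ) = 1 / X := by
      intro N X
      have hF : (N.factorial : ℝ) ≠ 0 := Nat.cast_ne_zero.2 N.factorial_ne_zero
      rw [div_div, mul_comm X, ← div_div, div_self hF]
    show ((n.factorial : ℝ) / (ell u n * (n:ℝ)^(2*n))) / (n.factorial : ℝ) *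
        (((n+2).factorial : ℝ) / (ell u ↑(n+2) * ((n+2:ℕ):ℝ)^(2*(n+2))) / ((n+2).factorial : ℝ))
      ≤ (((n+1).factorial : ℝ) / (ell u ↑(n+1) * ((n+1:ℕ):ℝ)^(2*(n+1))) / ((n+1).factorial : ℝ))^2
    rw [cancel n _, cancel (n+2) _, cancel (n+1) _,
      div_mul_div_comm, one_mul, div_pow, one_pow]
    exact one_div_le_one_div_of_le
      (pow_pos (mul_pos (hell (n+1)) (npow2_pos (n+1))) 2)
      (key_ineq u hpos hcont hlim hconv n)
  · refine ⟨1, one_pos, 1, one_pos, Real.exp (-2), Real.exp_pos _, 1, one_pos, ?_⟩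
    intro n
    have ha := hell n
    have hP := npow2_pos n
    have hfacpos : (0:ℝ) < (n.factorial : ℝ) := Nat.cast_pos.2 n.factorial_pos
    constructor
    · show 1 * Real.exp (-2) ^ n * (1 / ((n.factorial:ℝ) * ell u n))
        ≤ (n.factorial:ℝ) / (ell u n * (n:ℝ)^(2*n))
      rw [one_mul, mul_one_div,
        div_le_div_iff₀ (mul_pos hfacpos ha) (mul_pos ha hP)]
      have core : Real.exp (-2) ^ n * (n:ℝ)^(2*n)
          ≤ (n.factorial:ℝ) * (n.factorial:ℝ) := by
        have h1 : Real.exp (-2) = (Real.exp (-1))^2 := by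
          rw [← Real.exp_nat_mul]; norm_num
        have h3 : Real.exp (n:ℝ) = Real.exp 1 ^ n := by
          rw [← Real.exp_nat_mul]; norm_num
        have h2 : Real.exp (-1) * Real.exp 1 = 1 := by
          rw [← Real.exp_add]; norm_num
        have hfe := pow_le_factorial_mul_exp n
        calc Real.exp (-2) ^ n * (n:ℝ)^(2*n)
            = (Real.exp (-1) ^ n * (n:ℝ)^n)^2 := by
              rw [h1, pow_mul' ((n:ℝ)) 2 n]; ring
          _ ≤ (Real.exp (-1) ^ n * ((n.factorial:ℝ) * Real.exp (n:ℝ)))^2 := by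
              apply pow_le_pow_left₀ (by positivity)
                (mul_le_mul_of_nonneg_left hfe (by positivity)) 2
          _ = ((n.factorial:ℝ) * (Real.exp (-1) * Real.exp 1)^n)^2 := by
              rw [h3]; ring
          _ = (n.factorial:ℝ) * (n.factorial:ℝ) := by rw [h2]; ring
      calc Real.exp (-2)^n * (ell u n * (n:ℝ)^(2*n))
          = ell u n * (Real.exp (-2)^n * (n:ℝ)^(2*n)) := by ring
        _ ≤ ell u n * ((n.factorial:ℝ) * (n.factorial:ℝ)) :=
            mul_le_mul_of_nonneg_left core ha.le
        _ = (n.factorial:ℝ) * ((n.factorial:ℝ) * ell u n) := by ring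
    · show (n.factorial:ℝ) / (ell u n * (n:ℝ)^(2*n))
        ≤ 1 * 1^n * (1 / ((n.factorial:ℝ) * ell u n))
      rw [one_pow, one_mul, one_mul,
        div_le_div_iff₀ (mul_pos ha hP) (mul_pos hfacpos ha)]
      have core2 : (n.factorial:ℝ) * (n.factorial:ℝ) ≤ (n:ℝ)^(2*n) := by
        have h' : (n.factorial:ℝ) ≤ (n:ℝ)^n := by
          exact_mod_cast Nat.factorial_le_pow n
        calc (n.factorial:ℝ) * (n.factorial:ℝ) ≤ (n:ℝ)^n * (n:ℝ)^n :=
              mul_le_mul h' h' hfacpos.le (by positivity)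
          _ = (n:ℝ)^(2*n) := by rw [pow_mul' ((n:ℝ)) 2 n]; ring
      calc (n.factorial:ℝ) * ((n.factorial:ℝ) * ell u n)
          = ell u n * ((n.factorial:ℝ) * (n.factorial:ℝ)) := by ring
        _ ≤ ell u n * (n:ℝ)^(2*n) := mul_le_mul_of_nonneg_left core2 ha.le
        _ = 1 * (ell u n * (n:ℝ)^(2*n)) := by ring
end
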